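/- (Example 4.2: a constellation that is μ_θ-semistable but μ_D-unstable for arbitrarily big D.) With ι = ℤ, h ≡ 1, and θ given by θ(−1) = 1, θ(−r) = 0 for r ≥ 2, θ(0) = θ(1) = −1, θ(r) = 2^{1−r} for r ≥ 2, one has: (i) θ is a stability function for h (so D₋ = {0,1}); (ii) for h' the indicator function of {r ∈ ℤ : r ≥ 1}, μ_θ(h') = 0 = μ_θ(h); and (iii) for every N ≥ 1 the set D_N := {−N, …, N} is admissible and μ_{D_N}(h') = 2^{1−N}·N/(2N−1) > 0 = μ_{D_N}(h). -/
import Mathlib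


open scoped BigOperators

noncomputable section

/-- The value `θ(h') = ∑_ρ θ(ρ)·h'(ρ)` of a stability function on a Hilbert function. -/
def thetaVal {ι : Type*} (θ : ι → ℚ) (h' : ι → ℕ) : ℝ :=
  ∑' ρ : ι, (θ ρ : ℝ) * (h' ρ : ℝ)

/-- `r(h') = ∑_{ρ ∈ D₋} h'(ρ)`, the sum of the multiplicities over the negative part
`D₋ = {ρ | θ ρ < 0}`. -/
def rkNeg {ι : Type*} (θ : ι → ℚ) (h' : ι → ℕ) : ℝ :=
  ∑' ρ : {ρ : ι // θ ρ < 0}, (h' ρ.1 : ℝ)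

/-- The θ-slope `μ_θ(h') = −θ(h')/r(h')`. -/
def muTheta {ι : Type*} (θ : ι → ℚ) (h' : ι → ℕ) : ℝ :=
  -thetaVal θ h' / rkNeg θ h'

/-- `θ` is a stability function for the Hilbert function `h`: `D₋ = {θ < 0}` is finite,
`D₊ = {θ > 0}` is infinite, `θ` vanishes where `h` does, and `ρ ↦ θ(ρ)·h(ρ)` is summable
with sum `0`. -/
structure IsStabilityFunction {ι : Type*} (h : ι → ℕ) (θ : ι → ℚ) : Prop where
  finite_neg : {ρ : ι | θ ρ < 0}.Finite
  infinite_pos : {ρ : ι | 0 < θ ρ}.Infinite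
  theta_eq_zero_of_h_eq_zero : ∀ ρ, h ρ = 0 → θ ρ = 0
  summable : Summable fun ρ : ι => (θ ρ : ℝ) * (h ρ : ℝ)
  thetaVal_eq_zero : thetaVal θ h = 0

/-- `D` is an admissible finite subset: `D₋ ⊆ D ⊆ supp h` and `D ∩ D₊ ≠ ∅`. -/
def Admissible {ι : Type*} (h : ι → ℕ) (θ : ι → ℚ) (D : Finset ι) : Prop :=
  {ρ : ι | θ ρ < 0} ⊆ (D : Set ι) ∧ (D : Set ι) ⊆ {ρ : ι | h ρ ≠ 0} ∧ ∃ ρ ∈ D, 0 < θ ρ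

/-- `S_D = ∑_{ρ ∉ D} θ(ρ)·h(ρ)`. -/
def SD {ι : Type*} (h : ι → ℕ) (θ : ι → ℚ) (D : Finset ι) : ℝ :=
  ∑' ρ : {ρ : ι // ρ ∉ D}, (θ ρ.1 : ℝ) * (h ρ.1 : ℝ)

/-- The finite set `D \ D₋`. -/
def DsubNeg {ι : Type*} (θ : ι → ℚ) (D : Finset ι) : Finset ι :=
  D.filter fun ρ => 0 ≤ θ ρ

/-- `d = card (D \ D₋)`. -/
def dD {ι : Type*} (θ : ι → ℚ) (D : Finset ι) : ℕ :=
  (DsubNeg θ D).card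

/-- The D-slope
`μ_D(h') = (−1/r(h'))·( ∑_{ρ∈D} θ(ρ)h'(ρ) + (S_D/d)·∑_{ρ∈D∖D₋} h'(ρ)/h(ρ) )`. -/
def muD {ι : Type*} (h : ι → ℕ) (θ : ι → ℚ) (D : Finset ι) (h' : ι → ℕ) : ℝ :=
  (-1 / rkNeg θ h') *
    ((∑ ρ ∈ D, (θ ρ : ℝ) * (h' ρ : ℝ)) +
      (SD h θ D / (dD θ D : ℝ)) * ∑ ρ ∈ DsubNeg θ D, (h' ρ : ℝ) / (h ρ : ℝ))

/-- The Hilbert function `h ≡ 1` of `𝒪_X` for `X = Spec ℂ[x,y]/(xy)`. -/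
def hEx : ℤ → ℕ := fun _ => 1

/-- The stability function of Example 4.2: `θ(−1) = 1`, `θ(−r) = 0` for `r ≥ 2`,
`θ(0) = θ(1) = −1`, `θ(r) = 2^{1−r}` for `r ≥ 2`. -/
def θEx : ℤ → ℚ := fun r =>
  if r = -1 then 1
  else if r ≤ -2 then 0
  else if r = 0 ∨ r = 1 then -1
  else (2 : ℚ) ^ (1 - r)

/-- The Hilbert function of the submodule `(x̄)`: the indicator of `{r : ℤ | r ≥ 1}`. -/
def hSub : ℤ → ℕ := fun r => if 1 ≤ r then 1 else 0


namespace Ex42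

lemma θ_of_le {r : ℤ} (h : r ≤ -2) : θEx r = 0 := by
  rw [θEx]; rw [if_neg (by omega), if_pos h]

lemma θ_of_two_le {r : ℤ} (h : 2 ≤ r) : θEx r = (2:ℚ) ^ (1 - r) := by
  rw [θEx]; rw [if_neg (by omega), if_neg (by omega), if_neg (by omega)]

lemma θ_neg_iff (r : ℤ) : θEx r < 0 ↔ r = 0 ∨ r = 1 := by
  constructor
  · intro h
    by_contra hc
    push_neg at hc
    rcases lt_trichotomy r (-1) with h1 | h1 | h1
    · rw [θ_of_le (by omega)] at h; exact lt_irrefl _ h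
    · rw [h1] at h; norm_num [θEx] at h
    · rw [θ_of_two_le (by omega)] at h
      exact absurd h (not_lt.2 (le_of_lt (zpow_pos (by norm_num) _)))
  · rintro (rfl | rfl) <;> norm_num [θEx]

lemma hneg_set : {ρ : ℤ | θEx ρ < 0} = {0, 1} := by
  ext r; simp [θ_neg_iff]

lemma tsum_shift (f : ℤ → ℝ) (M : ℤ) (h0 : ∀ r, r < M → f r = 0) :
    ∑' n : ℕ, f (M + (n : ℤ)) = ∑' r : ℤ, f r := by
  have hi : Function.Injective (fun n : ℕ => M + (n : ℤ)) := fun a b hab => by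
    simpa using hab
  refine hi.tsum_eq ?_
  intro x hx
  simp only [Set.mem_range] at *
  rcases lt_or_ge x M with h | h
  · exact absurd (h0 x h) hx
  · exact ⟨(x - M).toNat, by omega⟩

lemma summable_shift (f : ℤ → ℝ) (M : ℤ) (h0 : ∀ r, r < M → f r = 0) :
    (Summable fun n : ℕ => f (M + (n : ℤ))) ↔ Summable f := by
  have hi : Function.Injective (fun n : ℕ => M + (n : ℤ)) := fun a b hab => by
    simpa using hab
  refine hi.summable_iff ?_
  intro x hx
  simp only [Set.mem_range, not_exists] at hx
  apply h0
  by_contra h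
  exact absurd (hx (x - M).toNat) (by push_neg; omega)

lemma geo_eq (M : ℤ) (n : ℕ) : (2:ℝ) ^ (1 - (M + (n:ℤ))) = 2 ^ (1 - M) * (2⁻¹ : ℝ) ^ n := by
  rw [show (1 - (M + (n:ℤ))) = (1 - M) + (-(n:ℤ)) by ring, zpow_add₀ two_ne_zero, zpow_neg,
    zpow_natCast, inv_pow]

lemma geo_summable (M : ℤ) : Summable fun n : ℕ => (2:ℝ) ^ (1 - (M + (n:ℤ))) := by
  simp_rw [geo_eq]
  exact (summable_geometric_of_lt_one (by norm_num) (by norm_num)).mul_left _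

lemma geo_tsum (M : ℤ) : ∑' n : ℕ, (2:ℝ) ^ (1 - (M + (n:ℤ))) = 2 ^ (2 - M) := by
  simp_rw [geo_eq]
  rw [tsum_mul_left, tsum_geometric_of_lt_one (by norm_num) (by norm_num),
    show (2:ℤ) - M = (1 - M) + 1 by ring, zpow_add₀ two_ne_zero]
  norm_num

lemma cast_geo {r : ℤ} (h : 2 ≤ r) : ((θEx r : ℚ) : ℝ) = (2:ℝ) ^ (1 - r) := by
  rw [θ_of_two_le h]
  push_cast
  ring

lemma sum_geo_Icc : ∀ N : ℤ, 1 ≤ N →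
    ∑ r ∈ Finset.Icc (2:ℤ) N, (2:ℝ) ^ (1 - r) = 1 - 2 ^ (1 - N) := by
  refine Int.le_induction ?_ ?_
  · rw [Finset.Icc_eq_empty (by omega)]; norm_num
  · intro N hN ih
    have hins : Finset.Icc (2:ℤ) (N+1) = insert (N+1) (Finset.Icc 2 N) := by
      ext r; simp; omega
    rw [hins, Finset.sum_insert (by simp), ih,
      show (1 - (N+1)) = (1-N) + (-1) by ring, zpow_add₀ (two_ne_zero)]
    norm_num
    ring

end Ex42
namespace Ex42

lemma hEx_cast (r : ℤ) : ((hEx r : ℕ) : ℝ) = 1 := by simp [hEx]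

lemma fE_eq : (fun r : ℤ => ((θEx r : ℝ) * (hEx r : ℝ))) = fun r : ℤ => ((θEx r : ℝ)) := by
  funext r; rw [hEx_cast, mul_one]

lemma gE_tail (n : ℕ) : ((θEx (-1 + ((n + 3 : ℕ) : ℤ)) : ℝ)) = (2:ℝ) ^ (1 - (2 + (n:ℤ))) := by
  rw [show (-1 + ((n + 3 : ℕ) : ℤ)) = (n:ℤ) + 2 by push_cast; ring, cast_geo (by omega)]
  congr 1
  ring

lemma gE_summable : Summable fun n : ℕ => ((θEx (-1 + (n : ℤ)) : ℝ)) := by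
  rw [← summable_nat_add_iff 3]
  exact (geo_summable 2).congr fun n => (gE_tail n).symm

lemma summable_E : Summable fun r : ℤ => (θEx r : ℝ) * (hEx r : ℝ) := by
  rw [fE_eq, ← summable_shift _ (-1) (fun r hr => by rw [θ_of_le (by omega)]; norm_num)]
  exact gE_summable

lemma thetaVal_E : thetaVal θEx hEx = 0 := by
  rw [thetaVal]
  have := fE_eq
  simp only [funext_iff] at this
  rw [tsum_congr this, ← tsum_shift _ (-1) (fun r hr => by rw [θ_of_le (by omega)]; norm_num),
    ← Summable.sum_add_tsum_nat_add 3 gE_summable, tsum_congr gE_tail, geo_tsum]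
  norm_num [Finset.sum_range_succ, θEx]

lemma fS_zero {r : ℤ} (hr : r < 1) : ((θEx r : ℝ) * (hSub r : ℝ)) = 0 := by
  have : hSub r = 0 := by simp [hSub]; omega
  rw [this]; norm_num

lemma gS_tail (n : ℕ) :
    ((θEx (1 + ((n + 1 : ℕ) : ℤ)) : ℝ) * (hSub (1 + ((n + 1 : ℕ) : ℤ)) : ℝ)) =
      (2:ℝ) ^ (1 - (2 + (n:ℤ))) := by
  rw [show ((1:ℤ) + ((n + 1 : ℕ) : ℤ)) = (n:ℤ) + 2 by push_cast; ring]
  have h1 : hSub ((n:ℤ) + 2) = 1 := by simp [hSub]; omega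
  rw [h1, cast_geo (by omega), Nat.cast_one, mul_one]
  congr 1
  ring

lemma gS_summable : Summable fun n : ℕ => ((θEx (1 + (n : ℤ)) : ℝ) * (hSub (1 + (n : ℤ)) : ℝ)) := by
  rw [← summable_nat_add_iff 1]
  exact (geo_summable 2).congr fun n => (gS_tail n).symm

lemma summable_S : Summable fun r : ℤ => (θEx r : ℝ) * (hSub r : ℝ) := by
  rw [← summable_shift _ 1 (fun r hr => fS_zero hr)]
  exact gS_summable

lemma thetaVal_S : thetaVal θEx hSub = 0 := by
  rw [thetaVal, ← tsum_shift _ 1 (fun r hr => fS_zero hr),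
    ← Summable.sum_add_tsum_nat_add 1 gS_summable, tsum_congr gS_tail, geo_tsum]
  norm_num [θEx, hSub]

lemma rkNeg_eq (h' : ℤ → ℕ) : rkNeg θEx h' = (h' 0 : ℝ) + (h' 1 : ℝ) := by
  have h1 : rkNeg θEx h' =
      ∑' x : ℤ, ({ρ : ℤ | θEx ρ < 0}).indicator (fun ρ => (h' ρ : ℝ)) x :=
    tsum_subtype {ρ : ℤ | θEx ρ < 0} (fun ρ => ((h' ρ : ℕ) : ℝ))
  rw [h1, hneg_set, tsum_eq_sum (s := ({0, 1} : Finset ℤ))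
    (fun b hb => Set.indicator_of_notMem (by simpa using hb) _)]
  rw [Finset.sum_pair (by norm_num)]
  rw [Set.indicator_of_mem (by simp), Set.indicator_of_mem (by simp)]

lemma SD_eq (N : ℤ) (hN : 1 ≤ N) : SD hEx θEx (Finset.Icc (-N) N) = (2:ℝ) ^ (1 - N) := by
  have h1 : SD hEx θEx (Finset.Icc (-N) N) =
      ∑' x : ℤ, ({ρ : ℤ | ρ ∉ Finset.Icc (-N) N}).indicator
        (fun ρ => (θEx ρ : ℝ) * (hEx ρ : ℝ)) x :=
    tsum_subtype {ρ : ℤ | ρ ∉ Finset.Icc (-N) N} (fun ρ => (θEx ρ : ℝ) * (hEx ρ : ℝ))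
  have h0 : ∀ r : ℤ, r < N + 1 →
      ({ρ : ℤ | ρ ∉ Finset.Icc (-N) N}).indicator
        (fun ρ => (θEx ρ : ℝ) * (hEx ρ : ℝ)) r = 0 := by
    intro r hr
    by_cases hm : r ∈ Finset.Icc (-N) N
    · exact Set.indicator_of_notMem (by simpa using hm) _
    · rw [Set.indicator_of_mem (by simpa using hm)]
      have : r ≤ -2 := by simp at hm; omega
      rw [θ_of_le this]; norm_num
  rw [h1, ← tsum_shift _ (N + 1) h0]
  have htail : ∀ n : ℕ,
      ({ρ : ℤ | ρ ∉ Finset.Icc (-N) N}).indicator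
        (fun ρ => (θEx ρ : ℝ) * (hEx ρ : ℝ)) (N + 1 + (n : ℤ)) =
      (2:ℝ) ^ (1 - (N + 1 + (n:ℤ))) := by
    intro n
    rw [Set.indicator_of_mem (by simp; omega), hEx_cast, mul_one, cast_geo (by omega)]
  rw [tsum_congr htail, geo_tsum]
  congr 1
  ring

end Ex42
namespace Ex42

lemma Icc_split (N : ℤ) (hN : 1 ≤ N) :
    Finset.Icc (-N) N = Finset.Icc (-N) 1 ∪ Finset.Icc 2 N := by
  ext r; simp; omega

lemma Icc_disj (N : ℤ) : Disjoint (Finset.Icc (-N) (1:ℤ)) (Finset.Icc 2 N) := by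
  rw [Finset.disjoint_left]; intro a ha hb; simp at ha hb; omega

lemma sum_S_Icc (N : ℤ) (hN : 1 ≤ N) :
    ∑ r ∈ Finset.Icc (-N) N, (θEx r : ℝ) * (hSub r : ℝ) = -(2:ℝ) ^ (1 - N) := by
  rw [Icc_split N hN, Finset.sum_union (Icc_disj N)]
  have h1 : ∑ r ∈ Finset.Icc (-N) (1:ℤ), (θEx r : ℝ) * (hSub r : ℝ) = -1 := by
    rw [Finset.sum_eq_single_of_mem 1 (by simp; omega)]
    · norm_num [θEx, hSub]
    · intro r hr hne
      simp at hr
      have : hSub r = 0 := by simp [hSub]; omega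
      rw [this]; norm_num
  have h2 : ∑ r ∈ Finset.Icc (2:ℤ) N, (θEx r : ℝ) * (hSub r : ℝ) =
      ∑ r ∈ Finset.Icc (2:ℤ) N, (2:ℝ) ^ (1 - r) := by
    refine Finset.sum_congr rfl fun r hr => ?_
    simp at hr
    have : hSub r = 1 := by simp [hSub]; omega
    rw [this, cast_geo (by omega), Nat.cast_one, mul_one]
  rw [h1, h2, sum_geo_Icc N hN]
  ring

lemma sum_E_Icc (N : ℤ) (hN : 1 ≤ N) :
    ∑ r ∈ Finset.Icc (-N) N, (θEx r : ℝ) * (hEx r : ℝ) = -(2:ℝ) ^ (1 - N) := by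
  rw [Icc_split N hN, Finset.sum_union (Icc_disj N)]
  have h1 : ∑ r ∈ Finset.Icc (-N) (1:ℤ), (θEx r : ℝ) * (hEx r : ℝ) = -1 := by
    rw [← Finset.sum_subset (Finset.Icc_subset_Icc (by omega) le_rfl :
        Finset.Icc (-1:ℤ) 1 ⊆ Finset.Icc (-N) 1)]
    · have : Finset.Icc (-1:ℤ) 1 = {-1, 0, 1} := by decide
      rw [this]
      norm_num [Finset.sum_insert, θEx, hEx]
    · intro r hr hne
      simp at hr hne
      rw [θ_of_le (by omega)]
      norm_num
  have h2 : ∑ r ∈ Finset.Icc (2:ℤ) N, (θEx r : ℝ) * (hEx r : ℝ) =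
      ∑ r ∈ Finset.Icc (2:ℤ) N, (2:ℝ) ^ (1 - r) := by
    refine Finset.sum_congr rfl fun r hr => ?_
    simp at hr
    rw [hEx_cast, mul_one, cast_geo (by omega)]
  rw [h1, h2, sum_geo_Icc N hN]
  ring

lemma DsubNeg_eq (N : ℤ) : DsubNeg θEx (Finset.Icc (-N) N) = Finset.Icc (-N) N \ {0, 1} := by
  ext r
  simp only [DsubNeg, Finset.mem_filter, Finset.mem_sdiff, Finset.mem_insert,
    Finset.mem_singleton, ← not_lt, θ_neg_iff]

lemma toNat_cast_real {a : ℤ} (h : 0 ≤ a) : ((a.toNat : ℕ) : ℝ) = (a : ℝ) := by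
  exact_mod_cast congrArg (Int.cast : ℤ → ℝ) (Int.toNat_of_nonneg h)

lemma dD_cast (N : ℤ) (hN : 1 ≤ N) : ((dD θEx (Finset.Icc (-N) N) : ℕ) : ℝ) = 2 * N - 1 := by
  have hsub : ({0, 1} : Finset ℤ) ⊆ Finset.Icc (-N) N := by
    intro r hr; simp at hr ⊢; omega
  have hc : dD θEx (Finset.Icc (-N) N) = (2 * N - 1).toNat := by
    rw [dD, DsubNeg_eq, Finset.card_sdiff_of_subset hsub, Int.card_Icc]
    have h01 : ({0, 1} : Finset ℤ).card = 2 := by decide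
    rw [h01]
    omega
  rw [hc, toNat_cast_real (by omega)]
  push_cast
  ring

lemma sum_ratio_S (N : ℤ) (hN : 1 ≤ N) :
    ∑ r ∈ DsubNeg θEx (Finset.Icc (-N) N), (hSub r : ℝ) / (hEx r : ℝ) = (N : ℝ) - 1 := by
  have h1 : ∑ r ∈ DsubNeg θEx (Finset.Icc (-N) N), (hSub r : ℝ) / (hEx r : ℝ) =
      ∑ r ∈ Finset.Icc (2:ℤ) N, (hSub r : ℝ) / (hEx r : ℝ) := by
    rw [DsubNeg_eq]
    refine (Finset.sum_subset ?_ ?_).symm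
    · intro r hr; simp at hr ⊢; omega
    · intro r hr hne
      simp at hr hne
      have : hSub r = 0 := by simp [hSub]; omega
      rw [this]; norm_num
  have h2 : ∑ r ∈ Finset.Icc (2:ℤ) N, (hSub r : ℝ) / (hEx r : ℝ) =
      ∑ r ∈ Finset.Icc (2:ℤ) N, (1:ℝ) := by
    refine Finset.sum_congr rfl fun r hr => ?_
    simp at hr
    have : hSub r = 1 := by simp [hSub]; omega
    rw [this, hEx_cast]
    norm_num
  rw [h1, h2, Finset.sum_const, nsmul_eq_mul, mul_one, Int.card_Icc,
    toNat_cast_real (by omega)]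
  push_cast
  ring

lemma sum_ratio_E (N : ℤ) (hN : 1 ≤ N) :
    ∑ r ∈ DsubNeg θEx (Finset.Icc (-N) N), (hEx r : ℝ) / (hEx r : ℝ) = 2 * (N : ℝ) - 1 := by
  have h2 : ∑ r ∈ DsubNeg θEx (Finset.Icc (-N) N), (hEx r : ℝ) / (hEx r : ℝ) =
      ∑ r ∈ DsubNeg θEx (Finset.Icc (-N) N), (1:ℝ) := by
    refine Finset.sum_congr rfl fun r hr => ?_
    rw [hEx_cast]; norm_num
  rw [h2, Finset.sum_const, nsmul_eq_mul, mul_one]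
  exact_mod_cast dD_cast N hN

end Ex42
/-- Example 4.2: a `(G,h)`-constellation that is μ_θ-semistable but μ_D-unstable for
the arbitrarily big subsets `D_N = {−N,…,N}`, `N ≥ 1`. -/
theorem example_4_2 :
    IsStabilityFunction hEx θEx ∧
    {ρ : ℤ | θEx ρ < 0} = {0, 1} ∧
    muTheta θEx hSub = 0 ∧ muTheta θEx hEx = 0 ∧
    ∀ N : ℤ, 1 ≤ N →
      Admissible hEx θEx (Finset.Icc (-N) N) ∧
      muD hEx θEx (Finset.Icc (-N) N) hSub =
        (2 : ℝ) ^ (1 - N) * ((N : ℝ) / (2 * (N : ℝ) - 1)) ∧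
      muD hEx θEx (Finset.Icc (-N) N) hEx = 0 ∧
      0 < muD hEx θEx (Finset.Icc (-N) N) hSub := by
  have hneg := Ex42.hneg_set
  refine ⟨⟨?_, ?_, ?_, Ex42.summable_E, Ex42.thetaVal_E⟩, hneg, ?_, ?_, ?_⟩
  · rw [hneg]; exact (Set.finite_singleton 1).insert 0
  · refine Set.Infinite.mono ?_ (Set.Ici_infinite (2:ℤ))
    intro r hr
    simp only [Set.mem_Ici] at hr
    simp only [Set.mem_setOf_eq, Ex42.θ_of_two_le hr]
    exact zpow_pos (by norm_num) _
  · intro ρ h; simp [hEx] at h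
  · rw [muTheta, Ex42.thetaVal_S]; norm_num
  · rw [muTheta, Ex42.thetaVal_E]; norm_num
  · intro N hN
    have hNR : (1:ℝ) ≤ (N:ℝ) := by exact_mod_cast hN
    have h2N : (2 * (N:ℝ) - 1) ≠ 0 := by nlinarith
    have hrS : rkNeg θEx hSub = 1 := by
      rw [Ex42.rkNeg_eq]; norm_num [hSub]
    have hrE : rkNeg θEx hEx = 2 := by
      rw [Ex42.rkNeg_eq]; norm_num [hEx]
    have hmuS : muD hEx θEx (Finset.Icc (-N) N) hSub =
        (2 : ℝ) ^ (1 - N) * ((N : ℝ) / (2 * (N : ℝ) - 1)) := by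
      rw [muD, hrS, Ex42.SD_eq N hN, Ex42.dD_cast N hN, Ex42.sum_S_Icc N hN,
        Ex42.sum_ratio_S N hN]
      field_simp
      ring
    refine ⟨⟨?_, fun ρ _ => by simp [hEx], ⟨-1, by simp; omega, by norm_num [θEx]⟩⟩,
      hmuS, ?_, ?_⟩
    · rw [hneg]
      intro ρ hρ
      simp only [Set.mem_insert_iff, Set.mem_singleton_iff] at hρ
      simp only [Finset.coe_Icc, Set.mem_Icc]
      omega
    · rw [muD, hrE, Ex42.SD_eq N hN, Ex42.dD_cast N hN, Ex42.sum_E_Icc N hN,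
        Ex42.sum_ratio_E N hN, div_mul_cancel₀ _ h2N]
      ring
    · rw [hmuS]
      exact mul_pos (zpow_pos (by norm_num) _)
        (div_pos (by linarith) (by nlinarith))
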